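/- The ratio s/r is uniformly bounded below by 5 - 2√6 over all pairs (r,s) with 0 < s < r < 1 that allow a compact packing of the plane with all three sizes of discs 1, r, s. -/

import Mathlib

/-- The angle at the center of the disc of radius `c` in the triangle of centers of three
pairwise externally tangent discs of radii `x`, `c`, `y` (law of cosines). -/
noncomputable def contactAngle (x c y : ℝ) : ℝ :=
  Real.arccos (((x+c)^2 + (y+c)^2 - (x+y)^2) / (2*(x+c)*(y+c)))

/-- A packing of the plane: a set of discs (center, radius) with positive radii whose
interiors are pairwise disjoint. -/
structure DiscPacking where
  discs : Set ((EuclideanSpace ℝ (Fin 2)) × ℝ)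
  radius_pos : ∀ d ∈ discs, 0 < d.2
  separated : ∀ d ∈ discs, ∀ e ∈ discs, d ≠ e → d.2 + e.2 ≤ dist d.1 e.1

/-- Two discs are (externally) tangent. -/
def Tangent (d e : (EuclideanSpace ℝ (Fin 2)) × ℝ) : Prop :=
  dist d.1 e.1 = d.2 + e.2

/-- The disc `d` is surrounded in `P` by a corona: a cyclic sequence of consecutively
tangent discs of `P`, all tangent to `d`, containing every disc of `P` tangent to `d`,
whose angles at the center of `d` sum to `2π`. -/
def HasCorona (P : DiscPacking) (d : (EuclideanSpace ℝ (Fin 2)) × ℝ) : Prop :=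
  ∃ n : ℕ, 3 ≤ n ∧ ∃ c : Fin n → (EuclideanSpace ℝ (Fin 2)) × ℝ,
    Function.Injective c ∧
    (∀ i, c i ∈ P.discs) ∧
    (∀ i, Tangent d (c i)) ∧
    (∀ i : Fin n, Tangent (c i) (c ⟨(i.val + 1) % n, Nat.mod_lt _ i.pos⟩)) ∧
    (∀ e ∈ P.discs, Tangent d e → ∃ i, c i = e) ∧
    (∑ i : Fin n,
      contactAngle (c i).2 d.2 ((c ⟨(i.val + 1) % n, Nat.mod_lt _ i.pos⟩).2) = 2 * Real.pi)

/-- A compact packing: every disc is surrounded by a corona. -/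
def IsCompactPacking (P : DiscPacking) : Prop :=
  P.discs.Nonempty ∧ ∀ d ∈ P.discs, HasCorona P d

/-!
If every neighbour of every `s`-disc were an `s`-disc, each `s`-disc would be surrounded by six
`s`-discs; among five points on a circle of radius `2s`, pairwise at least `2s` apart, one lies
within `π / 3` of any given direction, so stepping towards a unit disc lowers the squared distance
by a fixed amount at every step, an infinite descent. Hence some `s`-disc touches a disc of
radius at least `r`.

Suppose `s / r < 5 - 2√6` and look at the corona of that `s`-disc. A pair of consecutive big
discs subtends more than `α = arccos ((1 - 2√6) / 6)`, a big-small pair more than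
`β = arccos ((3 - √6) / 6)` (their values at the critical ratio) and a small-small pair exactly
`π / 3`. Around a cycle there are as many big-small as small-big transitions; together with the
upper bounds `π` and `π / 2` this leaves only coronas whose lower bounds already sum to `2π`,
because `α ≥ 2π / 3`, `α ≤ 5π / 6` and `α + 2β = 5π / 3` (the corona `r r s s` is tight).
-/

open Real Finset

section ContactAngle

variable {x y c : ℝ}

noncomputable def contactCos (x c y : ℝ) : ℝ :=
  ((x + c) ^ 2 + (y + c) ^ 2 - (x + y) ^ 2) / (2 * (x + c) * (y + c))

theorem contactAngle_eq_arccos (x c y : ℝ) : contactAngle x c y = arccos (contactCos x c y) :=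
  rfl

theorem contactCos_comm (x c y : ℝ) : contactCos x c y = contactCos y c x := by
  unfold contactCos
  ring

theorem contactAngle_comm (x c y : ℝ) : contactAngle x c y = contactAngle y c x := by
  rw [contactAngle_eq_arccos, contactCos_comm, ← contactAngle_eq_arccos]

theorem contactAngle_self (hc : 0 < c) : contactAngle c c c = π / 3 := by
  have : contactCos c c c = cos (π / 3) := by
    rw [cos_pi_div_three]
    unfold contactCos
    field_simp
    ring
  rw [contactAngle_eq_arccos, this, arccos_cos (by positivity) (by linarith [pi_pos])]

theorem contactCos_right_self (hx : 0 < x) (hc : 0 < c) : contactCos x c c = c / (x + c) := by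
  unfold contactCos
  field_simp
  ring

theorem neg_one_lt_contactCos (hx : 0 < x) (hc : 0 < c) (hy : 0 < y) : -1 < contactCos x c y := by
  have : contactCos x c y + 1 = 2 * c * (c + x + y) / ((x + c) * (y + c)) := by
    unfold contactCos
    field_simp
    ring
  have : 0 < 2 * c * (c + x + y) / ((x + c) * (y + c)) := by positivity
  linarith

theorem contactAngle_lt_pi (hx : 0 < x) (hc : 0 < c) (hy : 0 < y) : contactAngle x c y < π :=
  arccos_lt_pi.2 (neg_one_lt_contactCos hx hc hy)

theorem contactAngle_right_self_lt_pi_div_two (hx : 0 < x) (hc : 0 < c) :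
    contactAngle x c c < π / 2 := by
  rw [contactAngle_eq_arccos, arccos_lt_pi_div_two, contactCos_right_self hx hc]
  positivity

theorem contactCos_le_of_le_left {x' : ℝ} (hc : 0 < c) (hy : 0 < y) (hx' : 0 < x') (hxx : x' ≤ x) :
    contactCos x c y ≤ contactCos x' c y := by
  have hrepr : ∀ {x}, 0 < x →
      contactCos x c y = (c - y) / (c + y) + 2 * c * y / ((c + y) * (x + c)) := by
    intro x hx
    unfold contactCos
    field_simp
    ring
  rw [hrepr (hx'.trans_le hxx), hrepr hx']
  gcongr

end ContactAngle

section CriticalAngles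

-- `contactAngle r s r` and `contactAngle r s s` at `s / r = 5 - 2√6`.
noncomputable def critAngleBB : ℝ := arccos ((1 - 2 * √6) / 6)

noncomputable def critAngleBS : ℝ := arccos ((3 - √6) / 6)

theorem sq_sqrt_six : √6 ^ 2 = 6 := sq_sqrt (by norm_num)

theorem two_lt_sqrt_six : 2 < √6 := lt_sqrt_of_sq_lt (by norm_num)

theorem sqrt_six_lt_five_div_two : √6 < 5 / 2 := (sqrt_lt' (by norm_num)).2 (by norm_num)

variable {r s x y : ℝ}

theorem contactCos_lt_of_lt_crit (hs : 0 < s) (hr : 0 < r) (hsr : s < (5 - 2 * √6) * r) :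
    contactCos r s r < (1 - 2 * √6) / 6 := by
  have h6 := sq_sqrt_six
  have h2 := two_lt_sqrt_six
  have h5 := sqrt_six_lt_five_div_two
  unfold contactCos
  rw [div_lt_div_iff₀ (by positivity) (by norm_num)]
  have : 0 < ((5 - 2 * √6) * r - s) * (s + (7 - 2 * √6) * r) :=
    mul_pos (by linarith) (by nlinarith)
  nlinarith [mul_pos hs hr]

theorem contactCos_right_self_lt_of_lt_crit (hs : 0 < s) (hr : 0 < r)
    (hsr : s < (5 - 2 * √6) * r) : contactCos r s s < (3 - √6) / 6 := by
  have h6 := sq_sqrt_six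
  have h5 := sqrt_six_lt_five_div_two
  rw [contactCos_right_self hr hs, div_lt_div_iff₀ (by positivity) (by norm_num)]
  nlinarith [mul_pos hr hs]

theorem critAngleBB_lt_contactAngle (hs : 0 < s) (hsr : s < (5 - 2 * √6) * r) (hrx : r ≤ x)
    (hry : r ≤ y) : critAngleBB < contactAngle x s y := by
  have hr : 0 < r := by nlinarith [sqrt_six_lt_five_div_two]
  have hx := hr.trans_le hrx
  have hy := hr.trans_le hry
  have hcos : contactCos x s y < (1 - 2 * √6) / 6 := calc
    contactCos x s y ≤ contactCos r s y := contactCos_le_of_le_left hs hy hr hrx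
    _ = contactCos y s r := contactCos_comm r s y
    _ ≤ contactCos r s r := contactCos_le_of_le_left hs hr hr hry
    _ < (1 - 2 * √6) / 6 := contactCos_lt_of_lt_crit hs hr hsr
  exact arccos_lt_arccos (neg_one_lt_contactCos hx hs hy).le hcos
    (by linarith [two_lt_sqrt_six])

theorem critAngleBS_lt_contactAngle (hs : 0 < s) (hsr : s < (5 - 2 * √6) * r) (hrx : r ≤ x) :
    critAngleBS < contactAngle x s s := by
  have hr : 0 < r := by nlinarith [sqrt_six_lt_five_div_two]
  have hx := hr.trans_le hrx
  have hcos : contactCos x s s < (3 - √6) / 6 :=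
    (contactCos_le_of_le_left hs hs hr hrx).trans_lt (contactCos_right_self_lt_of_lt_crit hs hr hsr)
  exact arccos_lt_arccos (neg_one_lt_contactCos hx hs hs).le hcos
    (by linarith [two_lt_sqrt_six])

theorem two_pi_div_three_le_critAngleBB : 2 * π / 3 ≤ critAngleBB := by
  have : arccos (-(1 / 2)) = 2 * π / 3 := by
    rw [arccos_neg, ← cos_pi_div_three, arccos_cos (by positivity) (by linarith [pi_pos])]
    ring
  rw [← this, critAngleBB]
  exact arccos_le_arccos (by linarith [two_lt_sqrt_six])

theorem critAngleBB_le_five_pi_div_six : critAngleBB ≤ 5 * π / 6 := by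
  have : arccos (-(√3 / 2)) = 5 * π / 6 := by
    rw [arccos_neg, ← cos_pi_div_six, arccos_cos (by positivity) (by linarith [pi_pos])]
    ring
  rw [← this, critAngleBB]
  refine arccos_le_arccos ?_
  have h3 : √3 * √3 = 3 := mul_self_sqrt (by norm_num)
  nlinarith [sqrt_nonneg 3, sq_sqrt_six, sqrt_six_lt_five_div_two]

theorem critAngleBB_add_two_mul_critAngleBS : critAngleBB + 2 * critAngleBS = 5 * π / 3 := by
  set γ := arccos ((3 + √6) / 6)
  have h6 := sq_sqrt_six
  have h2 := two_lt_sqrt_six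
  have h5 := sqrt_six_lt_five_div_two
  have hcos : cos γ = (3 + √6) / 6 := cos_arccos (by linarith) (by linarith)
  have hγ : γ ≤ π / 2 := arccos_le_pi_div_two.2 (by linarith)
  have hsin : sin γ * √3 = (3 * √6 - 3) / 6 := by
    have hsin0 : 0 ≤ sin γ := sin_nonneg_of_nonneg_of_le_pi (arccos_nonneg _) (arccos_le_pi _)
    refine (pow_left_inj₀ (by positivity) (by nlinarith) two_ne_zero).1 ?_
    rw [mul_pow, sq_sqrt (by norm_num : (0 : ℝ) ≤ 3), sin_sq, hcos]
    nlinarith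
  have hBB : critAngleBB = π - 2 * γ := by
    refine arccos_eq_of_eq_cos (by linarith) (by linarith [arccos_nonneg ((3 + √6) / 6)]) ?_
    rw [cos_pi_sub, cos_two_mul, hcos]
    nlinarith
  have hBS : critAngleBS = γ + π / 3 := by
    refine arccos_eq_of_eq_cos (by linarith [arccos_nonneg ((3 + √6) / 6), pi_pos])
      (by linarith [pi_pos]) ?_
    rw [cos_add, cos_pi_div_three, sin_pi_div_three, hcos]
    linear_combination hsin / 2
  rw [hBB, hBS]
  ring

end CriticalAngles

section CyclicPairs

variable {n : ℕ} [NeZero n]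

theorem Fin.forall_of_imp_add_one {p : Fin n → Prop} (h : ∀ i, p i → p (i + 1)) {i₀ : Fin n}
    (h₀ : p i₀) (j : Fin n) : p j := by
  obtain ⟨m, rfl⟩ := Nat.exists_eq_succ_of_ne_zero (NeZero.ne n)
  have key : ∀ k : Fin (m + 1), p (i₀ + k) := by
    refine Fin.induction (by simpa using h₀) fun k hk => ?_
    rw [← Fin.coeSucc_eq_succ, ← add_assoc]
    exact h _ hk
  simpa using key (j - i₀)

theorem Fin.mk_add_one_mod (i : Fin n) : (⟨(i.val + 1) % n, Nat.mod_lt _ i.pos⟩ : Fin n) = i + 1 :=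
  Fin.ext (by simp [Fin.val_add])

variable (b : Fin n → Bool)

def pairCount (x y : Bool) : ℕ := #{i | (b i, b (i + 1)) = (x, y)}

theorem sum_pair_eq_sum_pairCount {M : Type*} [AddCommMonoid M] (f : Bool → Bool → M) :
    ∑ i, f (b i) (b (i + 1)) = ∑ x, ∑ y, pairCount b x y • f x y := by
  rw [← Fintype.sum_prod_type',
    ← sum_fiberwise' univ (fun i => (b i, b (i + 1))) fun p => f p.1 p.2]
  simp only [sum_const, pairCount]

-- Count the `true` entries once as first and once as second members of pairs.
theorem pairCount_true_false : pairCount b true false = pairCount b false true := by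
  have hleft := sum_pair_eq_sum_pairCount b fun x _ => if x then 1 else 0
  have hright := sum_pair_eq_sum_pairCount b fun _ y => if y then 1 else 0
  have hshift : ∑ i, (if b (i + 1) then 1 else 0) = ∑ i, (if b i then 1 else 0) :=
    Equiv.sum_comp (Equiv.addRight 1) fun i => if b i then 1 else 0
  simp only [Fintype.sum_bool, if_true, if_false, smul_eq_mul, mul_one, mul_zero,
    add_zero, Bool.false_eq_true] at hleft hright
  omega

theorem pairCount_false_false_eq_zero (h : pairCount b true false = 0) (hb : ∃ i, b i) :
    pairCount b false false = 0 := by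
  have hstep : ∀ i, b i → b (i + 1) := by
    intro i hi
    by_contra hi'
    have : i ∈ ({i | (b i, b (i + 1)) = (true, false)} : Finset (Fin n)) := by simp_all
    simp_all [pairCount]
  obtain ⟨i₀, hi₀⟩ := hb
  have hall := Fin.forall_of_imp_add_one hstep hi₀
  simp [pairCount, hall]

end CyclicPairs

section CoronaAngles

-- Bounds on the angle of a consecutive corona pair around an `s`-disc; `true` marks a disc of
-- radius at least `r`.
noncomputable def critLowerAngle : Bool → Bool → ℝ
  | true, true => critAngleBB
  | false, false => π / 3
  | _, _ => critAngleBS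

noncomputable def upperAngle : Bool → Bool → ℝ
  | true, true => π
  | false, false => π / 3
  | _, _ => π / 2

variable {r s x y : ℝ}

theorem contactAngle_mem_Ioo (hs : 0 < s) (hsr : s < (5 - 2 * √6) * r) (hx : r ≤ x)
    (hy : y = s ∨ r ≤ y) :
    contactAngle x s y ∈ Set.Ioo (critLowerAngle true (decide (r ≤ y)))
      (upperAngle true (decide (r ≤ y))) := by
  have hr : 0 < r := by nlinarith [sqrt_six_lt_five_div_two]
  have hxpos := hr.trans_le hx
  rcases hy with rfl | hy
  · have : ¬r ≤ y := by nlinarith [two_lt_sqrt_six]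
    simp only [this, decide_false, critLowerAngle, upperAngle]
    exact ⟨critAngleBS_lt_contactAngle hs hsr hx,
      contactAngle_right_self_lt_pi_div_two hxpos hs⟩
  · simp only [hy, decide_true, critLowerAngle, upperAngle]
    exact ⟨critAngleBB_lt_contactAngle hs hsr hx hy,
      contactAngle_lt_pi hxpos hs (hr.trans_le hy)⟩

theorem contactAngle_mem_Icc (hs : 0 < s) (hsr : s < (5 - 2 * √6) * r) (hx : x = s ∨ r ≤ x)
    (hy : y = s ∨ r ≤ y) :
    contactAngle x s y ∈ Set.Icc (critLowerAngle (decide (r ≤ x)) (decide (r ≤ y)))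
      (upperAngle (decide (r ≤ x)) (decide (r ≤ y))) := by
  have hsr' : ¬r ≤ s := by nlinarith [two_lt_sqrt_six, sqrt_six_lt_five_div_two]
  rcases hx with rfl | hx
  · rcases hy with rfl | hy
    · simp only [hsr', decide_false, critLowerAngle, upperAngle, contactAngle_self hs]
      exact ⟨le_rfl, le_rfl⟩
    · have := contactAngle_mem_Ioo hs hsr hy (Or.inl rfl)
      simp only [hy, hsr', decide_true, decide_false, critLowerAngle, upperAngle] at this ⊢
      rw [contactAngle_comm]
      exact Set.Ioo_subset_Icc_self this
  · simp only [hx, decide_true]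
    exact Set.Ioo_subset_Icc_self (contactAngle_mem_Ioo hs hsr hx hy)

theorem two_pi_le_critical_corona_sum {k p m : ℕ} (hpm : p = 0 → m = 0)
    (hup : 2 * π < k * π + p * π + m * (π / 3)) :
    2 * π ≤ k * critAngleBB + 2 * p * critAngleBS + m * (π / 3) := by
  have hBB := two_pi_div_three_le_critAngleBB
  have hBB' := critAngleBB_le_five_pi_div_six
  have hsum := critAngleBB_add_two_mul_critAngleBS
  have hπ := pi_pos
  have hcount : 6 < 3 * k + 3 * p + m := by
    have : (6 : ℝ) < 3 * k + 3 * p + m := by nlinarith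
    exact_mod_cast this
  have hcases : 3 ≤ k ∨ (2 ≤ k ∧ 1 ≤ p) ∨ (1 ≤ k ∧ 1 ≤ p ∧ 1 ≤ m) ∨ (1 ≤ p ∧ 4 ≤ m) ∨
      (1 ≤ k ∧ 2 ≤ p) ∨ (2 ≤ p ∧ 1 ≤ m) ∨ 3 ≤ p := by omega
  rify at hcases
  rw [show k * critAngleBB + 2 * p * critAngleBS + m * (π / 3) =
    k * critAngleBB + p * (5 * π / 3 - critAngleBB) + m * (π / 3) by rw [← hsum]; ring]
  rcases hcases with h | ⟨h, h'⟩ | ⟨h, h', h''⟩ | ⟨h, h'⟩ | ⟨h, h'⟩ | ⟨h, h'⟩ | h <;> nlinarith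

end CoronaAngles

theorem le_div_of_sum_contactAngle_eq {r s : ℝ} (hs : 0 < s) (hr : 0 < r) {n : ℕ} [NeZero n]
    (ρ : Fin n → ℝ) (hρ : ∀ i, ρ i = s ∨ r ≤ ρ i) (hbig : ∃ i, r ≤ ρ i)
    (hsum : ∑ i, contactAngle (ρ i) s (ρ (i + 1)) = 2 * π) : 5 - 2 * √6 ≤ s / r := by
  by_contra! hlt
  have hsr : s < (5 - 2 * √6) * r := (div_lt_iff₀ hr).1 hlt
  set b : Fin n → Bool := fun i => decide (r ≤ ρ i)
  obtain ⟨i₀, hi₀⟩ := hbig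
  have hbounds i := contactAngle_mem_Icc hs hsr (hρ i) (hρ (i + 1))
  have hstrict := contactAngle_mem_Ioo hs hsr hi₀ (hρ (i₀ + 1))
  have hb₀ : b i₀ = true := decide_eq_true hi₀
  have hlow : ∑ i, critLowerAngle (b i) (b (i + 1)) < 2 * π :=
    hsum ▸ sum_lt_sum (fun i _ => (hbounds i).1) ⟨i₀, mem_univ _, hb₀ ▸ hstrict.1⟩
  have hup : 2 * π < ∑ i, upperAngle (b i) (b (i + 1)) :=
    hsum ▸ sum_lt_sum (fun i _ => (hbounds i).2) ⟨i₀, mem_univ _, hb₀ ▸ hstrict.2⟩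
  rw [sum_pair_eq_sum_pairCount] at hlow hup
  simp only [Fintype.sum_bool, critLowerAngle, upperAngle, pairCount_true_false, nsmul_eq_mul]
    at hlow hup
  have := two_pi_le_critical_corona_sum (k := pairCount b true true)
    (fun h => pairCount_false_false_eq_zero b ((pairCount_true_false b).trans h) ⟨i₀, hb₀⟩)
    (by linarith)
  linarith

section Kissing

open Complex ComplexConjugate

theorem norm_exp_mul_I_sub_exp_mul_I_lt_one {a b : ℝ} (h : |a - b| < π / 3) :
    ‖exp (a * I) - exp (b * I)‖ < 1 := by
  have hfactor : exp (a * I) - exp (b * I) = exp (b * I) * (exp (I * ↑(a - b)) - 1) := by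
    rw [mul_sub, ← Complex.exp_add, mul_one]
    push_cast
    ring_nf
  rw [hfactor, norm_mul, norm_exp_ofReal_mul_I, one_mul, norm_exp_I_mul_ofReal_sub_one,
    norm_mul, Real.norm_two, Real.norm_eq_abs]
  have hx : |(a - b) / 2| < π / 6 := by
    rw [abs_div, abs_two]
    linarith
  have hπ := pi_pos
  obtain ⟨hlo, hhi⟩ := abs_lt.1 hx
  have hsin_hi : Real.sin ((a - b) / 2) < 1 / 2 := by
    rw [← sin_pi_div_six]
    exact sin_lt_sin_of_lt_of_le_pi_div_two (by linarith) (by linarith) hhi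
  have hsin_lo : -(1 / 2) < Real.sin ((a - b) / 2) := by
    rw [← sin_pi_div_six, ← Real.sin_neg]
    exact sin_lt_sin_of_lt_of_le_pi_div_two (by linarith) (by linarith) hlo
  have := abs_lt.2 ⟨hsin_lo, hsin_hi⟩
  linarith

theorem exists_half_le_re_of_separated {ι : Type*} [Fintype ι] (hι : 4 < Fintype.card ι)
    (u : ι → ℂ) (hu : ∀ i, ‖u i‖ = 1) (hsep : Pairwise fun i j => 1 ≤ ‖u i - u j‖) :
    ∃ i, 1 / 2 ≤ (u i).re := by
  -- Otherwise the arguments of the `-u i` lie in `(-2π/3, 2π/3)`, and two of them share one of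
  -- four bins of width `π / 3`.
  by_contra! hre
  have hπ := pi_pos
  set φ : ι → ℝ := fun i => arg (-u i)
  have hexp : ∀ i, -u i = exp (φ i * I) := fun i => by
    simpa [hu i] using (norm_mul_exp_arg_mul_I (-u i)).symm
  have hφ : ∀ i, |φ i| < 2 * π / 3 := by
    intro i
    by_contra! hge
    have hcos : Real.cos |φ i| ≤ Real.cos (2 * π / 3) :=
      Real.cos_le_cos_of_nonneg_of_le_pi (by positivity) (abs_arg_le_pi _) hge
    have hne : -u i ≠ 0 := by simp [← norm_ne_zero_iff, hu i]
    rw [Real.cos_abs, cos_arg hne, norm_neg, hu i, show 2 * π / 3 = π - π / 3 by ring,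
      Real.cos_pi_sub, cos_pi_div_three] at hcos
    linarith [hre i, neg_re (u i)]
  set bin : ι → ℤ := fun i => ⌊(φ i + 2 * π / 3) / (π / 3)⌋
  have hbin : ∀ i ∈ (univ : Finset ι), bin i ∈ Finset.Icc (0 : ℤ) 3 := by
    intro i _
    obtain ⟨hlo, hhi⟩ := abs_lt.1 (hφ i)
    rw [Finset.mem_Icc, Int.floor_nonneg, Int.floor_le_iff, le_div_iff₀ (by positivity),
      div_lt_iff₀ (by positivity)]
    push_cast
    constructor <;> linarith
  obtain ⟨i, -, j, -, hij, hbij⟩ :=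
    exists_ne_map_eq_of_card_lt_of_maps_to (by simpa using hι) hbin
  have hclose : |φ j - φ i| < π / 3 := by
    have := Int.abs_sub_lt_one_of_floor_eq_floor hbij.symm
    rw [← sub_div, abs_div, abs_of_pos (by positivity : 0 < π / 3), div_lt_one (by positivity)]
      at this
    simpa using this
  have := norm_exp_mul_I_sub_exp_mul_I_lt_one hclose
  rw [← hexp, ← hexp, neg_sub_neg] at this
  linarith [hsep hij]

theorem exists_norm_sub_sq_le_of_separated {ι : Type*} [Fintype ι] (hι : 4 < Fintype.card ι)
    {ρ : ℝ} (hρ : 0 < ρ) (z : ι → ℂ) (hz : ∀ i, ‖z i‖ = ρ)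
    (hsep : Pairwise fun i j => ρ ≤ ‖z i - z j‖) (w : ℂ) :
    ∃ i, ‖w - z i‖ ^ 2 ≤ ‖w‖ ^ 2 - ρ * ‖w‖ + ρ ^ 2 := by
  rcases eq_or_ne w 0 with rfl | hw
  · obtain ⟨i⟩ : Nonempty ι := Fintype.card_pos_iff.1 (by omega)
    exact ⟨i, by simp [hz]⟩
  have ha : 0 < ρ * ‖w‖ := by positivity
  set u : ι → ℂ := fun i => z i * conj w / ((ρ * ‖w‖ : ℝ) : ℂ)
  have hu_sub : ∀ i j, ‖u i - u j‖ = ‖z i - z j‖ * ‖w‖ / (ρ * ‖w‖) := fun i j => by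
    simp only [u, ← sub_div, ← sub_mul, norm_div, norm_mul, RCLike.norm_conj,
      Complex.norm_of_nonneg ha.le]
  have hu : ∀ i, ‖u i‖ = 1 := fun i => by
    simp only [u, norm_div, norm_mul, RCLike.norm_conj, Complex.norm_of_nonneg ha.le, hz]
    exact div_self ha.ne'
  have hu_sep : Pairwise fun i j => 1 ≤ ‖u i - u j‖ := fun i j hij => by
    change 1 ≤ ‖u i - u j‖
    rw [hu_sub, le_div_iff₀ ha, one_mul]
    exact mul_le_mul_of_nonneg_right (hsep hij) (norm_nonneg w)
  obtain ⟨i, hi⟩ := exists_half_le_re_of_separated hι u hu hu_sep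
  rw [div_ofReal_re, le_div_iff₀ ha] at hi
  refine ⟨i, ?_⟩
  have hzi : normSq (z i) = ρ ^ 2 := by rw [← Complex.sq_norm, hz i]
  rw [Complex.sq_norm, Complex.sq_norm, normSq_sub, hzi]
  have : (w * conj (z i)).re = (z i * conj w).re := by simp only [mul_re, conj_re, conj_im]; ring
  nlinarith

end Kissing

theorem false_of_forall_exists_le_sub {α : Type*} {p : α → Prop} (f : α → ℝ) {δ : ℝ}
    (hδ : 0 < δ) (hf : ∀ x, p x → 0 ≤ f x) (hstep : ∀ x, p x → ∃ y, p y ∧ f y ≤ f x - δ)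
    {x₀ : α} (hx₀ : p x₀) : False := by
  have hiter : ∀ k : ℕ, ∃ y, p y ∧ f y ≤ f x₀ - k * δ := by
    intro k
    induction k with
    | zero => exact ⟨x₀, hx₀, by simp⟩
    | succ k ih =>
      obtain ⟨y, hy, hfy⟩ := ih
      obtain ⟨y', hy', hfy'⟩ := hstep y hy
      exact ⟨y', hy', by push_cast; linarith⟩
  obtain ⟨k, hk⟩ := exists_nat_gt (f x₀ / δ)
  obtain ⟨y, hy, hfy⟩ := hiter k
  rw [div_lt_iff₀ hδ] at hk
  linarith [hf y hy]

theorem DiscPacking.exists_tangent_dist_sq_le {P : DiscPacking}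
    {d u : EuclideanSpace ℝ (Fin 2) × ℝ} (hd : d ∈ P.discs) (hcor : HasCorona P d)
    (hu : u ∈ P.discs) (hdu : d.2 < u.2) (hnb : ∀ e ∈ P.discs, Tangent d e → e.2 = d.2) :
    ∃ e ∈ P.discs, Tangent d e ∧ dist e.1 u.1 ^ 2 ≤ dist d.1 u.1 ^ 2 - 2 * d.2 * (u.2 - d.2) := by
  obtain ⟨n, -, c, hinj, hc, hdc, -, -, hsum⟩ := hcor
  have hpos := P.radius_pos d hd
  have hcd : ∀ i, (c i).2 = d.2 := fun i => hnb _ (hc i) (hdc i)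
  have hn : n = 6 := by
    simp only [hcd, contactAngle_self hpos, sum_const, card_univ, Fintype.card_fin,
      nsmul_eq_mul] at hsum
    have : (n : ℝ) = 6 := by nlinarith [pi_pos]
    exact_mod_cast this
  let f : EuclideanSpace ℝ (Fin 2) ≃ₗᵢ[ℝ] ℂ := Complex.orthonormalBasisOneI.repr.symm
  have hf : ∀ a b, ‖f a - f b‖ = dist a b := fun a b => by rw [← dist_eq_norm, f.dist_map]
  have hz : ∀ i, ‖f (c i).1 - f d.1‖ = 2 * d.2 := fun i => by
    rw [hf, dist_comm, hdc i, hcd i]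
    ring
  have hsep : Pairwise fun i j => 2 * d.2 ≤ ‖(f (c i).1 - f d.1) - (f (c j).1 - f d.1)‖ := by
    intro i j hij
    rw [sub_sub_sub_cancel_right, hf, two_mul]
    nth_rw 1 [← hcd i, ← hcd j]
    exact P.separated _ (hc i) _ (hc j) (hinj.ne hij)
  obtain ⟨i, hi⟩ := exists_norm_sub_sq_le_of_separated (by simp [hn]) (by positivity) _ hz hsep
    (f u.1 - f d.1)
  rw [sub_sub_sub_cancel_right, hf, hf, dist_comm u.1, dist_comm u.1] at hi
  have hdist : u.2 + d.2 ≤ dist d.1 u.1 := by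
    rw [add_comm]
    exact P.separated d hd u hu (fun h => hdu.ne (congrArg Prod.snd h))
  exact ⟨c i, hc i, hdc i, by nlinarith⟩

theorem IsCompactPacking.exists_tangent_radius_ne {P : DiscPacking}
    {d u : EuclideanSpace ℝ (Fin 2) × ℝ} (hP : IsCompactPacking P) (hd : d ∈ P.discs)
    (hu : u ∈ P.discs) (hdu : d.2 < u.2) :
    ∃ d' ∈ P.discs, d'.2 = d.2 ∧ ∃ e ∈ P.discs, Tangent d' e ∧ e.2 ≠ d.2 := by
  by_contra! hall
  refine false_of_forall_exists_le_sub (p := fun d' => d' ∈ P.discs ∧ d'.2 = d.2)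
    (fun d' => dist d'.1 u.1 ^ 2) (δ := 2 * d.2 * (u.2 - d.2))
    (by nlinarith [P.radius_pos d hd]) (fun _ _ => sq_nonneg _) ?_ ⟨hd, rfl⟩
  rintro d' ⟨hd', hd'd⟩
  have hnb e (he : e ∈ P.discs) (hd'e : Tangent d' e) : e.2 = d.2 := hall d' hd' hd'd e he hd'e
  obtain ⟨e, he, hd'e, hdist⟩ := DiscPacking.exists_tangent_dist_sq_le hd' (hP.2 d' hd') hu
    (hd'd ▸ hdu) fun e he hd'e => (hnb e he hd'e).trans hd'd.symm
  exact ⟨e, ⟨he, hnb e he hd'e⟩, hd'd ▸ hdist⟩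

theorem stmt_12 (r s : ℝ) (hs : 0 < s) (hsr : s < r) (hr : r < 1)
    (h : ∃ P : DiscPacking, IsCompactPacking P ∧
      (∃ d ∈ P.discs, d.2 = 1) ∧ (∃ d ∈ P.discs, d.2 = r) ∧ (∃ d ∈ P.discs, d.2 = s) ∧
      (∀ d ∈ P.discs, d.2 = 1 ∨ d.2 = r ∨ d.2 = s)) :
    5 - 2*Real.sqrt 6 ≤ s / r := by
  obtain ⟨P, hP, ⟨u, hu, hu1⟩, -, ⟨d₀, hd₀, hd₀s⟩, hradii⟩ := h
  have hρ : ∀ e ∈ P.discs, e.2 = s ∨ r ≤ e.2 := fun e he => by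
    rcases hradii e he with h | h | h <;> simp [h, hr.le]
  obtain ⟨d, hd, hds, e, he, hde, hes⟩ := hP.exists_tangent_radius_ne hd₀ hu (by linarith)
  rw [hd₀s] at hds hes
  obtain ⟨n, hn, c, -, hc, -, -, hcover, hsum⟩ := hP.2 d hd
  have : NeZero n := ⟨by omega⟩
  obtain ⟨i, rfl⟩ := hcover e he hde
  refine le_div_of_sum_contactAngle_eq hs (hs.trans hsr) (fun i => (c i).2) (fun j => hρ _ (hc j))
    ⟨i, (hρ _ (hc i)).resolve_left hes⟩ ?_
  simpa only [Fin.mk_add_one_mod, hds] using hsum
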